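/- If 0 < α < 1/2 satisfies sin(πα) > π²/8 − 1, then ∑_{j=3}^∞ |ĝ_α(j)| < ĝ_α(1), where ĝ_α(j) are the sine Fourier coefficients of g_α. -/

import Mathlib

/-!
On each of the three pieces `g_α` is affine, so integrating against `sin (j π x)` gives
`ĝ_α(j) = 4 sin (j π α) / (α j² π²)` for odd `j` and `0` for even `j`. Hence
`∑_{j ≥ 3} |ĝ_α(j)| ≤ 4 / (α π²) · ∑_{j odd, j ≥ 3} 1 / j² = 4 / (α π²) · (π² / 8 - 1)`,
which the hypothesis makes smaller than `4 / (α π²) · sin (π α) = ĝ_α(1)`.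
-/

open Real

noncomputable def gprofile (α x : ℝ) : ℝ :=
  if x < α then x / α else if x < 1 - α then 1 else (1 - x) / α

noncomputable def gcoeff (α : ℝ) (j : ℕ) : ℝ :=
  2 * ∫ x in (0:ℝ)..1, gprofile α x * Real.sin (j * π * x)

open Set intervalIntegral

lemma integral_affine_mul_sin {c : ℝ} (hc : c ≠ 0) (p q a b : ℝ) :
    ∫ x in a..b, (p * x + q) * sin (c * x) =
      (p * sin (c * b) / c ^ 2 - (p * b + q) * cos (c * b) / c) -
        (p * sin (c * a) / c ^ 2 - (p * a + q) * cos (c * a) / c) := by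
  refine integral_eq_sub_of_hasDerivAt
    (f := fun y => p * sin (c * y) / c ^ 2 - (p * y + q) * cos (c * y) / c)
    (fun x _ => ?_) (Continuous.intervalIntegrable (by fun_prop) _ _)
  have hcx : HasDerivAt (fun y => c * y) c x := by simpa using (hasDerivAt_id x).const_mul c
  have := (((hasDerivAt_sin _).comp x hcx).const_mul p).div_const (c ^ 2) |>.sub
    ((((hasDerivAt_id x).const_mul p).add_const q).mul ((hasDerivAt_cos _).comp x hcx) |>.div_const c)
  refine this.congr_deriv ?_
  simp only [Function.comp_apply, id]
  field_simp
  ring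

-- The pieces are written as `p * x + q`, the shape integrated by `integral_affine_mul_sin`.
section Profile

variable {α x : ℝ}

lemma gprofile_of_mem_Icc_left (hα0 : 0 < α) (hα : α < 1 / 2) (hx : x ∈ Icc 0 α) :
    gprofile α x = 1 / α * x + 0 := by
  have : x < 1 - α := by linarith [hx.2]
  rcases hx.2.lt_or_eq with h | rfl
  · simp [gprofile, h, div_eq_inv_mul]
  · simp [gprofile, this, hα0.ne']

lemma gprofile_of_mem_Icc_middle (hα0 : 0 < α) (hx : x ∈ Icc α (1 - α)) :
    gprofile α x = 0 * x + 1 := by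
  rcases hx.2.lt_or_eq with h | rfl
  · simp [gprofile, h, hx.1.not_gt]
  · simp [gprofile, hx.1.not_gt, hα0.ne']

lemma gprofile_of_mem_Icc_right (hα : α < 1 / 2) (hx : x ∈ Icc (1 - α) 1) :
    gprofile α x = -(1 / α) * x + 1 / α := by
  have h1 : ¬ x < α := by linarith [hx.1]
  simp only [gprofile, h1, hx.1.not_gt, if_false]
  ring

end Profile

lemma integral_gprofile_mul_sin {α c : ℝ} (hα0 : 0 < α) (hα : α < 1 / 2) (hc : c ≠ 0) :
    ∫ x in (0:ℝ)..1, gprofile α x * sin (c * x) =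
      (sin (c * α) + sin (c * (1 - α)) - sin c) / (α * c ^ 2) := by
  have piece : ∀ {a b p q : ℝ}, a ≤ b → (∀ x ∈ Icc a b, gprofile α x = p * x + q) →
      IntervalIntegrable (fun x => gprofile α x * sin (c * x)) MeasureTheory.volume a b ∧
      ∫ x in a..b, gprofile α x * sin (c * x) = ∫ x in a..b, (p * x + q) * sin (c * x) := by
    intro a b p q hab hg
    have heq : EqOn (fun x => gprofile α x * sin (c * x)) (fun x => (p * x + q) * sin (c * x))
        (uIcc a b) := fun x hx => by
      rw [uIcc_of_le hab] at hx
      simp only [hg x hx]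
    exact ⟨(ContinuousOn.congr (by fun_prop) heq).intervalIntegrable, integral_congr heq⟩
  obtain ⟨i₁, e₁⟩ := piece hα0.le fun x hx => gprofile_of_mem_Icc_left hα0 hα hx
  obtain ⟨i₂, e₂⟩ := piece (by linarith) fun x hx => gprofile_of_mem_Icc_middle hα0 hx
  obtain ⟨i₃, e₃⟩ := piece (by linarith) fun x hx => gprofile_of_mem_Icc_right hα hx
  rw [← integral_add_adjacent_intervals (i₁.trans i₂) i₃, ← integral_add_adjacent_intervals i₁ i₂,
    e₁, e₂, e₃, integral_affine_mul_sin hc, integral_affine_mul_sin hc,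
    integral_affine_mul_sin hc]
  simp only [mul_zero, mul_one, sin_zero, cos_zero]
  field_simp
  ring

section Coefficients

variable {α : ℝ}

lemma gcoeff_eq (hα0 : 0 < α) (hα : α < 1 / 2) (j : ℕ) :
    gcoeff α j = 2 * (1 - (-1) ^ j) * sin (j * π * α) / (α * (j * π) ^ 2) := by
  rcases eq_or_ne j 0 with rfl | hj
  · simp [gcoeff]
  have hc : (j * π : ℝ) ≠ 0 := by positivity
  rw [gcoeff, integral_gprofile_mul_sin hα0 hα hc, sin_nat_mul_pi, mul_one_sub,
    sin_nat_mul_pi_sub]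
  ring

lemma gcoeff_of_odd (hα0 : 0 < α) (hα : α < 1 / 2) {j : ℕ} (hj : Odd j) :
    gcoeff α j = 4 * sin (j * π * α) / (α * (j * π) ^ 2) := by
  rw [gcoeff_eq hα0 hα, hj.neg_one_pow]
  ring

lemma gcoeff_of_even (hα0 : 0 < α) (hα : α < 1 / 2) {j : ℕ} (hj : Even j) :
    gcoeff α j = 0 := by
  simp [gcoeff_eq hα0 hα, hj.neg_one_pow]

lemma abs_gcoeff_le (hα0 : 0 < α) (hα : α < 1 / 2) (j : ℕ) :
    |gcoeff α j| ≤ 4 / (α * π ^ 2) * (1 / (j : ℝ) ^ 2) := by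
  rcases j.even_or_odd with hj | hj
  · rw [gcoeff_of_even hα0 hα hj, abs_zero]
    positivity
  · have : (j : ℝ) ≠ 0 := by exact_mod_cast hj.pos.ne'
    rw [gcoeff_of_odd hα0 hα hj, abs_div, abs_mul, abs_of_pos (by positivity : α * (j * π) ^ 2 > 0)]
    calc |(4 : ℝ)| * |sin (j * π * α)| / (α * (j * π) ^ 2)
        ≤ 4 * 1 / (α * (j * π) ^ 2) := by
          gcongr
          · norm_num
          · exact abs_sin_le_one _
      _ = 4 / (α * π ^ 2) * (1 / (j : ℝ) ^ 2) := by ring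

end Coefficients

lemma hasSum_one_div_odd_sq : HasSum (fun k : ℕ => 1 / (2 * k + 1 : ℝ) ^ 2) (π ^ 2 / 8) := by
  have hzeta := hasSum_zeta_two
  have heven : HasSum (fun k : ℕ => 1 / ((2 * k : ℕ) : ℝ) ^ 2) (π ^ 2 / 24) := by
    have := hzeta.mul_left (1 / 4)
    rw [show 1 / 4 * (π ^ 2 / 6) = π ^ 2 / 24 by ring] at this
    refine this.congr_fun fun k => ?_
    push_cast
    ring
  have hodd : Summable (fun k : ℕ => 1 / ((2 * k + 1 : ℕ) : ℝ) ^ 2) :=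
    hzeta.summable.comp_injective fun a b h => by omega
  have hsum : π ^ 2 / 6 = π ^ 2 / 24 + ∑' k : ℕ, 1 / ((2 * k + 1 : ℕ) : ℝ) ^ 2 :=
    hzeta.unique (HasSum.even_add_odd (f := fun n : ℕ => 1 / (n : ℝ) ^ 2) heven hodd.hasSum)
  have hodd' := hodd.hasSum
  rw [show ∑' k : ℕ, 1 / ((2 * k + 1 : ℕ) : ℝ) ^ 2 = π ^ 2 / 8 by linarith] at hodd'
  exact_mod_cast hodd'

lemma hasSum_one_div_odd_sq_from_three :
    HasSum (fun k : ℕ => 1 / (2 * k + 3 : ℝ) ^ 2) (π ^ 2 / 8 - 1) := by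
  have := (hasSum_nat_add_iff' 1).2 hasSum_one_div_odd_sq
  norm_num [add_assoc, mul_add] at this ⊢
  exact this

theorem stmt_3 (α : ℝ) (hα0 : 0 < α) (hα : α < 1/2)
    (h : Real.sin (π * α) > π^2 / 8 - 1) :
    ∑' j : ℕ, |gcoeff α (j + 3)| < gcoeff α 1 := by
  set C : ℝ := 4 / (α * π ^ 2)
  have hbound := hasSum_one_div_odd_sq_from_three.mul_left C
  have hle (k : ℕ) : |gcoeff α (2 * k + 3)| ≤ C * (1 / (2 * k + 3 : ℝ) ^ 2) := by
    simpa using abs_gcoeff_le hα0 hα (2 * k + 3)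
  have hodd : Summable fun k : ℕ => |gcoeff α (2 * k + 3)| :=
    Summable.of_nonneg_of_le (fun _ => abs_nonneg _) hle hbound.summable
  have heven (k : ℕ) : |gcoeff α (2 * k + 1 + 3)| = 0 := by
    rw [gcoeff_of_even hα0 hα ⟨k + 2, by ring⟩, abs_zero]
  calc ∑' j : ℕ, |gcoeff α (j + 3)|
      = ∑' k : ℕ, |gcoeff α (2 * k + 3)| := by
        rw [← tsum_even_add_odd (f := fun j => |gcoeff α (j + 3)|) hodd
          (by simp only [heven]; exact summable_zero)]
        simp only [heven, tsum_zero, add_zero]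
    _ ≤ C * (π ^ 2 / 8 - 1) := hasSum_le hle hodd.hasSum hbound
    _ < C * sin (π * α) := by gcongr
    _ = gcoeff α 1 := by
        rw [gcoeff_of_odd hα0 hα odd_one]
        simp only [C, Nat.cast_one, one_mul]
        ring
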